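/- arXiv:1312.6838 — 2 statements merged into one kernel-verified Lean document; each statement's English description precedes it below -/
import Mathlib

section
/- Let Ã_S = P^{(S)} A denote the column-based low-rank approximation of A using column subset S. Then for any P ⊂ S, with R = S \ P and E = A - P^{(P)} A, one has Ã_S = Ã_P + Ẽ_R, where Ẽ_R = R^{(R)} E is the low-rank approximation of E based on the columns R of E. -/
open Matrix BigOperators

noncomputable section

/-- The submatrix of `A` consisting of the columns indexed by `S`. -/
def cols {m n : ℕ} (A : Matrix (Fin m) (Fin n) ℝ) (S : Finset (Fin n)) :
    Matrix (Fin m) {j // j ∈ S} ℝ :=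
  Matrix.of fun i j => A i j.1

/-- Orthogonal projection matrix onto the column span of `C`,
`C (Cᵀ C)⁻¹ Cᵀ`. -/
def projM {m : ℕ} {k : Type} [Fintype k] [DecidableEq k]
    (C : Matrix (Fin m) k ℝ) : Matrix (Fin m) (Fin m) ℝ :=
  C * (Cᵀ * C)⁻¹ * Cᵀ

/-- Squared Frobenius norm. -/
def frobSq {a b : Type} [Fintype a] [Fintype b] (A : Matrix a b ℝ) : ℝ :=
  ∑ i, ∑ j, (A i j) ^ 2

/-!
The column span of `A_S` is spanned by the columns of `A_P` together with those of the residual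
`F = (1 - P^{(P)}) A_{S∖P}`, which are orthogonal to `A_P`. Hence `P^{(P)} + R^{(S∖P)}` is a
symmetric matrix that fixes the columns of `A_S` and has its range in their span; such a matrix
is unique, so it equals `P^{(S)}`. Finally `R^{(S∖P)} P^{(P)} = 0`, so applying `R^{(S∖P)}` to
`E = A - P^{(P)} A` or to `A` gives the same result.
-/

theorem Matrix.IsSymm.eq_of_mul_eq_self_of_eq_mul {R ι κ : Type*} [CommSemiring R] [Fintype ι]
    [Fintype κ] {P₁ P₂ : Matrix ι ι R} {B : Matrix ι κ R} (h₁ : P₁.IsSymm) (h₂ : P₂.IsSymm)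
    (hB₁ : P₁ * B = B) (hB₂ : P₂ * B = B) (hX₁ : ∃ X : Matrix κ ι R, P₁ = B * X)
    (hX₂ : ∃ X : Matrix κ ι R, P₂ = B * X) :
    P₁ = P₂ := by
  obtain ⟨X₁, rfl⟩ := hX₁
  obtain ⟨X₂, rfl⟩ := hX₂
  have h₁₂ : B * X₁ * (B * X₂) = B * X₂ := by rw [← Matrix.mul_assoc, hB₁]
  have h₂₁ : B * X₂ * (B * X₁) = B * X₁ := by rw [← Matrix.mul_assoc, hB₂]
  calc B * X₁ = B * X₂ * (B * X₁) := h₂₁.symm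
    _ = (B * X₁ * (B * X₂))ᵀ := by rw [transpose_mul, h₁.eq, h₂.eq]
    _ = B * X₂ := by rw [h₁₂, h₂.eq]

section projM

variable {m : ℕ} {k l : Type} [Fintype k] [DecidableEq k]

theorem projM_isSymm (C : Matrix (Fin m) k ℝ) : (projM C).IsSymm := by
  simp [IsSymm, projM, transpose_mul, transpose_nonsing_inv, Matrix.mul_assoc]

theorem projM_eq_mul (C : Matrix (Fin m) k ℝ) : projM C = C * ((Cᵀ * C)⁻¹ * Cᵀ) :=
  Matrix.mul_assoc _ _ _

theorem projM_mul_self {C : Matrix (Fin m) k ℝ} (hC : IsUnit (Cᵀ * C)) : projM C * C = C := by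
  rw [projM, Matrix.mul_assoc, Matrix.mul_assoc,
    nonsing_inv_mul _ ((isUnit_iff_isUnit_det _).mp hC), Matrix.mul_one]

theorem transpose_sub_projM_mul_mul_eq_zero {C : Matrix (Fin m) k ℝ} (hC : IsUnit (Cᵀ * C))
    (D : Matrix (Fin m) l ℝ) : (D - projM C * D)ᵀ * C = 0 := by
  rw [transpose_sub, transpose_mul, (projM_isSymm C).eq, Matrix.sub_mul, Matrix.mul_assoc,
    projM_mul_self hC, sub_self]

omit [Fintype k] [DecidableEq k] in
theorem projM_mul_eq_zero_of_transpose_mul_eq_zero [Fintype l] [DecidableEq l]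
    {F : Matrix (Fin m) l ℝ} {C : Matrix (Fin m) k ℝ} (h : Fᵀ * C = 0) : projM F * C = 0 := by
  rw [projM, Matrix.mul_assoc, h, Matrix.mul_zero]

theorem projM_mul_projM_eq_zero_of_transpose_mul_eq_zero [Fintype l] [DecidableEq l]
    {F : Matrix (Fin m) l ℝ} {C : Matrix (Fin m) k ℝ} (h : Fᵀ * C = 0) : projM F * projM C = 0 := by
  rw [projM_eq_mul C, ← Matrix.mul_assoc, projM_mul_eq_zero_of_transpose_mul_eq_zero h,
    Matrix.zero_mul]

theorem projM_eq_projM_add_projM_sub {k₁ k₂ : Type} [Fintype k₁] [DecidableEq k₁] [Fintype k₂]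
    [DecidableEq k₂] {B : Matrix (Fin m) k ℝ} {C : Matrix (Fin m) k₁ ℝ} {D : Matrix (Fin m) k₂ ℝ}
    (hB : IsUnit (Bᵀ * B)) (hC : IsUnit (Cᵀ * C))
    (hF : IsUnit ((D - projM C * D)ᵀ * (D - projM C * D)))
    (hCB : ∃ X : Matrix k k₁ ℝ, C = B * X) (hDB : ∃ X : Matrix k k₂ ℝ, D = B * X)
    (hBCD : ∃ (X : Matrix k₁ k ℝ) (Y : Matrix k₂ k ℝ), B = C * X + D * Y) :
    projM B = projM C + projM (D - projM C * D) := by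
  set F := D - projM C * D with hF_def
  have hFC : Fᵀ * C = 0 := transpose_sub_projM_mul_mul_eq_zero hC D
  have hGD : projM F * D = F := by
    calc projM F * D = projM F * (projM C * D + F) := by rw [hF_def, add_sub_cancel]
      _ = F := by
        rw [Matrix.mul_add, ← Matrix.mul_assoc,
          projM_mul_projM_eq_zero_of_transpose_mul_eq_zero hFC, Matrix.zero_mul, zero_add,
          projM_mul_self hF]
  have hPC : (projM C + projM F) * C = C := by
    rw [Matrix.add_mul, projM_mul_self hC, projM_mul_eq_zero_of_transpose_mul_eq_zero hFC,
      add_zero]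
  have hPD : (projM C + projM F) * D = D := by
    rw [Matrix.add_mul, hGD, hF_def, add_sub_cancel]
  refine (projM_isSymm B).eq_of_mul_eq_self_of_eq_mul ((projM_isSymm C).add (projM_isSymm F))
    (projM_mul_self hB) ?_ ⟨_, projM_eq_mul B⟩ ?_
  · obtain ⟨X, Y, hXY⟩ := hBCD
    rw [hXY, Matrix.mul_add, ← Matrix.mul_assoc, ← Matrix.mul_assoc, hPC, hPD]
  · obtain ⟨XC, hXC⟩ := hCB
    obtain ⟨XD, hXD⟩ := hDB
    have hQ : projM C = B * (XC * ((Cᵀ * C)⁻¹ * Cᵀ)) := by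
      rw [← Matrix.mul_assoc, ← hXC, projM_eq_mul]
    have hF_eq : F = B * (XD - XC * ((Cᵀ * C)⁻¹ * Cᵀ) * D) := by
      rw [hF_def, hQ, Matrix.mul_sub, ← hXD, Matrix.mul_assoc]
    refine ⟨XC * ((Cᵀ * C)⁻¹ * Cᵀ) + (XD - XC * ((Cᵀ * C)⁻¹ * Cᵀ) * D) * ((Fᵀ * F)⁻¹ * Fᵀ),
      ?_⟩
    rw [hQ, projM_eq_mul F, Matrix.mul_add, ← Matrix.mul_assoc B (XD - _), ← hF_eq]

end projM

section cols

variable {m n : ℕ}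

theorem cols_sub (A B : Matrix (Fin m) (Fin n) ℝ) (T : Finset (Fin n)) :
    cols (A - B) T = cols A T - cols B T :=
  rfl

theorem cols_mul (M : Matrix (Fin m) (Fin m) ℝ) (A : Matrix (Fin m) (Fin n) ℝ)
    (T : Finset (Fin n)) : cols (M * A) T = M * cols A T :=
  rfl

theorem cols_mul_one_submatrix_apply (A : Matrix (Fin m) (Fin n) ℝ) (T : Finset (Fin n))
    {ι : Type*} (f : ι → Fin n) (i : Fin m) (j : ι) :
    (cols A T * (1 : Matrix (Fin n) (Fin n) ℝ).submatrix ((↑) : T → Fin n) f :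
      Matrix (Fin m) ι ℝ) i j = if f j ∈ T then A i (f j) else 0 := by
  simp only [mul_apply, cols, of_apply, submatrix_apply, one_apply, mul_ite, mul_one, mul_zero]
  rw [Finset.sum_coe_sort T (fun x => if x = f j then A i x else 0), Finset.sum_ite_eq']

theorem exists_cols_eq_mul_of_subset (A : Matrix (Fin m) (Fin n) ℝ) {T U : Finset (Fin n)}
    (hUT : U ⊆ T) : ∃ X : Matrix T U ℝ, cols A U = cols A T * X :=
  ⟨(1 : Matrix (Fin n) (Fin n) ℝ).submatrix (↑) (↑), by
    ext i j
    exact ((cols_mul_one_submatrix_apply A T _ i j).trans (if_pos (hUT j.2))).symm⟩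

theorem exists_cols_eq_add_cols_sdiff (A : Matrix (Fin m) (Fin n) ℝ) (S P : Finset (Fin n)) :
    ∃ (X : Matrix P S ℝ) (Y : Matrix (S \ P : Finset (Fin n)) S ℝ),
      cols A S = cols A P * X + cols A (S \ P) * Y :=
  ⟨(1 : Matrix (Fin n) (Fin n) ℝ).submatrix (↑) (↑),
    (1 : Matrix (Fin n) (Fin n) ℝ).submatrix (↑) (↑), by
    ext i j
    rw [Matrix.add_apply, cols_mul_one_submatrix_apply, cols_mul_one_submatrix_apply]
    by_cases hjP : (j : Fin n) ∈ P
    · simp [hjP, cols]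
    · simp [hjP, cols, Finset.mem_sdiff, j.2]⟩

end cols

theorem stmt5 {m n : ℕ} (A : Matrix (Fin m) (Fin n) ℝ) (S P : Finset (Fin n))
    (hPS : P ⊂ S)
    (hS : IsUnit ((cols A S)ᵀ * cols A S))
    (hP : IsUnit ((cols A P)ᵀ * cols A P))
    (hR : IsUnit ((cols (A - projM (cols A P) * A) (S \ P))ᵀ *
      cols (A - projM (cols A P) * A) (S \ P))) :
    projM (cols A S) * A =
      projM (cols A P) * A +
        projM (cols (A - projM (cols A P) * A) (S \ P)) *
          (A - projM (cols A P) * A) := by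
  rw [cols_sub, cols_mul] at hR ⊢
  have hsplit := projM_eq_projM_add_projM_sub hS hP hR
    (exists_cols_eq_mul_of_subset A hPS.subset)
    (exists_cols_eq_mul_of_subset A Finset.sdiff_subset)
    (exists_cols_eq_add_cols_sdiff A S P)
  have hGQ := projM_mul_projM_eq_zero_of_transpose_mul_eq_zero
    (transpose_sub_projM_mul_mul_eq_zero hP (cols A (S \ P)))
  rw [hsplit, Matrix.add_mul, Matrix.mul_sub, ← Matrix.mul_assoc _ (projM (cols A P)), hGQ,
    Matrix.zero_mul, sub_zero]
end
end

section
/- Let Q ∈ ℝ^{m×l} have orthonormal columns, W = Qᵀ A, and let W̃_k be the best rank-k approximation of W (k ≤ l). Then Q W̃_k minimizes ‖A - A_{:S} T‖_F² over all T of rank at most k whenever span(Q) = span(A_{:S}); equivalently, Q W̃_k is the best rank-k approximation of A within the column space of A_{:S}. -/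
open Matrix BigOperators

noncomputable section

/-!
Since `Q` has orthonormal columns, `A - Q B` splits orthogonally into `A - Q Qᵀ A` and
`Q (Qᵀ A - B)`, so `‖A - Q B‖² = ‖A - Q Qᵀ A‖² + ‖Qᵀ A - B‖²`: among matrices `Q B` with
`rank B ≤ k`, the best approximation of `A` is `Q W̃ₖ`. As the columns of `Q` and of `A_{:S}`
span the same space, `A_{:S} T = Q (P T)` for a fixed `P`, with `rank (P T) ≤ rank T`, and
conversely `Q W̃ₖ = A_{:S} (R W̃ₖ)` for a fixed `R`.
-/

section Frobenius

variable {a b c : Type} [Fintype a] [Fintype b] [Fintype c] [DecidableEq c]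

lemma frobSq_eq_trace (X : Matrix a b ℝ) : frobSq X = trace (Xᵀ * X) := by
  unfold frobSq trace
  rw [Finset.sum_comm]
  simp [mul_apply, sq]

lemma frobSq_add_of_transpose_mul_eq_zero {X Y : Matrix a b ℝ} (h : Xᵀ * Y = 0) :
    frobSq (X + Y) = frobSq X + frobSq Y := by
  have h' : Yᵀ * X = 0 := by simpa [transpose_mul] using congrArg transpose h
  simp only [frobSq_eq_trace, transpose_add, Matrix.add_mul, Matrix.mul_add, h, h', trace_add,
    add_zero, zero_add]

lemma frobSq_mul_of_transpose_mul_self {Q : Matrix a c ℝ} (hQ : Qᵀ * Q = 1)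
    (M : Matrix c b ℝ) : frobSq (Q * M) = frobSq M := by
  rw [frobSq_eq_trace, frobSq_eq_trace, transpose_mul, Matrix.mul_assoc,
    ← Matrix.mul_assoc Qᵀ Q M, hQ, Matrix.one_mul]

lemma frobSq_sub_mul_eq {Q : Matrix a c ℝ} (hQ : Qᵀ * Q = 1) (A : Matrix a b ℝ)
    (B : Matrix c b ℝ) :
    frobSq (A - Q * B) = frobSq (A - Q * (Qᵀ * A)) + frobSq (Qᵀ * A - B) := by
  have hsplit : A - Q * B = (A - Q * (Qᵀ * A)) + Q * (Qᵀ * A - B) := by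
    rw [Matrix.mul_sub]; abel
  have hresidual : (A - Q * (Qᵀ * A))ᵀ * Q = 0 := by
    rw [transpose_sub, Matrix.sub_mul, transpose_mul, transpose_mul, transpose_transpose,
      Matrix.mul_assoc (Aᵀ * Q), hQ, Matrix.mul_one, sub_self]
  have horth : (A - Q * (Qᵀ * A))ᵀ * (Q * (Qᵀ * A - B)) = 0 := by
    rw [← Matrix.mul_assoc, hresidual, Matrix.zero_mul]
  rw [hsplit, frobSq_add_of_transpose_mul_eq_zero horth, frobSq_mul_of_transpose_mul_self hQ]

lemma frobSq_sub_mul_le_of_isMin {Q : Matrix a c ℝ} (hQ : Qᵀ * Q = 1) (A : Matrix a b ℝ)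
    {k : ℕ} {W : Matrix c b ℝ}
    (hW : ∀ Z : Matrix c b ℝ, Z.rank ≤ k → frobSq (Qᵀ * A - W) ≤ frobSq (Qᵀ * A - Z))
    {Z : Matrix c b ℝ} (hZ : Z.rank ≤ k) :
    frobSq (A - Q * W) ≤ frobSq (A - Q * Z) := by
  rw [frobSq_sub_mul_eq hQ A W, frobSq_sub_mul_eq hQ A Z]
  exact add_le_add_right (hW Z hZ) _

end Frobenius

lemma Matrix.exists_mul_eq_of_span_le {R m a b : Type*} [CommSemiring R] [Fintype a]
    {M : Matrix m a R} {N : Matrix m b R}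
    (h : Submodule.span R (Set.range Nᵀ) ≤ Submodule.span R (Set.range Mᵀ)) :
    ∃ X : Matrix a b R, M * X = N := by
  have hcol : ∀ j, Nᵀ j ∈ LinearMap.range M.mulVecLin := fun j => by
    rw [range_mulVecLin]
    exact h (Submodule.subset_span ⟨j, rfl⟩)
  choose x hx using hcol
  refine ⟨(Matrix.of x)ᵀ, ?_⟩
  ext i j
  simpa [mul_apply, mulVec, dotProduct] using congrFun (hx j) i

theorem stmt18_general {m n l k : ℕ} (A : Matrix (Fin m) (Fin n) ℝ)
    (S : Finset (Fin n))
    (Q : Matrix (Fin m) (Fin l) ℝ) (hQ : Qᵀ * Q = 1)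
    (hspan : Submodule.span ℝ (Set.range Qᵀ) =
      Submodule.span ℝ (Set.range (cols A S)ᵀ))
    (Wk : Matrix (Fin l) (Fin n) ℝ) (hWkrank : Wk.rank ≤ k)
    (hWk : ∀ Z : Matrix (Fin l) (Fin n) ℝ, Z.rank ≤ k →
      frobSq (Qᵀ * A - Wk) ≤ frobSq (Qᵀ * A - Z)) :
    (∃ T₀ : Matrix {j // j ∈ S} (Fin n) ℝ, T₀.rank ≤ k ∧ cols A S * T₀ = Q * Wk) ∧
      ∀ T : Matrix {j // j ∈ S} (Fin n) ℝ, T.rank ≤ k →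
        frobSq (A - Q * Wk) ≤ frobSq (A - cols A S * T) := by
  obtain ⟨R, hR⟩ := exists_mul_eq_of_span_le hspan.le
  obtain ⟨P, hP⟩ := exists_mul_eq_of_span_le hspan.ge
  refine ⟨⟨R * Wk, (rank_mul_le_right _ _).trans hWkrank, by rw [← Matrix.mul_assoc, hR]⟩,
    fun T hT => ?_⟩
  rw [← hP, Matrix.mul_assoc]
  exact frobSq_sub_mul_le_of_isMin hQ A hWk ((rank_mul_le_right _ _).trans hT)

theorem stmt18 {m n l k : ℕ} (hk : k ≤ l) (A : Matrix (Fin m) (Fin n) ℝ)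
    (S : Finset (Fin n)) (hl : S.card = l)
    (hS : IsUnit ((cols A S)ᵀ * cols A S))
    (Q : Matrix (Fin m) (Fin l) ℝ) (hQ : Qᵀ * Q = 1)
    (hspan : Submodule.span ℝ (Set.range Qᵀ) =
      Submodule.span ℝ (Set.range (cols A S)ᵀ))
    (Wk : Matrix (Fin l) (Fin n) ℝ) (hWkrank : Wk.rank ≤ k)
    (hWk : ∀ Z : Matrix (Fin l) (Fin n) ℝ, Z.rank ≤ k →
      frobSq (Qᵀ * A - Wk) ≤ frobSq (Qᵀ * A - Z)) :
    (∃ T₀ : Matrix {j // j ∈ S} (Fin n) ℝ, T₀.rank ≤ k ∧ cols A S * T₀ = Q * Wk) ∧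
      ∀ T : Matrix {j // j ∈ S} (Fin n) ℝ, T.rank ≤ k →
        frobSq (A - Q * Wk) ≤ frobSq (A - cols A S * T) :=
  stmt18_general A S Q hQ hspan Wk hWkrank hWk
end
end
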